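/- arXiv:1803.03251 — 8 statements merged into one kernel-verified Lean document; each statement's English description precedes it below -/
import Mathlib

section
/- Let 𝒦 ⊆ {−K,…,K} with |𝒦| ≥ 3 and η ∈ 𝕂^N with |η_i| = 1 for all i, and for each k ∈ 𝒦 let q̃_k be a static dual certificate at time step k for η. Let q(x,v) = (1/|𝒦|) Σ_{k∈𝒦} q̃_k(x + kτv) be the associated 𝒦-static average certificate. If (x,v) ∈ Ω satisfies |q(x,v)| = 1, then either (x,v) = (x_i,v_i) for some particle i ∈ {1,…,N}, or (x,v) is a ghost particle of the configuration with respect to 𝒦. -/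
open MeasureTheory Complex Real Set

noncomputable section

/-- Phase space: positions and velocities in `ℝ^d`. -/
abbrev PS (d : ℕ) := (Fin d → ℝ) × (Fin d → ℝ)

/-- The phase-space domain `Ω`. -/
def Omega (d K : ℕ) (τ : ℝ) : Set (PS d) :=
  {p | ∀ k : ℤ, |k| ≤ (K : ℤ) → ∀ j, p.1 j + (k : ℝ) * τ * p.2 j ∈ Set.Icc (0 : ℝ) 1}

/-- The affine set `L_{i,k}` attached to a particle `p₀` and a time sample `k`. -/
def Lset (d K : ℕ) (τ : ℝ) (p₀ : PS d) (k : ℤ) : Set (PS d) :=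
  {p ∈ Omega d K τ | ∀ j, (p.1 j - p₀.1 j) + (k : ℝ) * τ * (p.2 j - p₀.2 j) = 0}

/-- `g` is a ghost particle of the configuration `P` with respect to the
set of time samples `Ks`. -/
def IsGhost {d K N : ℕ} (τ : ℝ) (P : Fin N → PS d) (Ks : Finset ℤ) (g : PS d) : Prop :=
  g ∈ Omega d K τ ∧ ∃ ι : ℤ → Fin N, Set.InjOn ι (Ks : Set ℤ) ∧
    (⋂ k ∈ Ks, Lset d K τ (P (ι k)) k) = {g}

/-- Integral of a complex function against a complex measure, via the Jordan
decompositions of the real and imaginary parts. -/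
def cintegral {α : Type*} [MeasurableSpace α] (μ : ComplexMeasure α) (f : α → ℂ) : ℂ :=
  ((∫ x, f x ∂(ComplexMeasure.re μ).toJordanDecomposition.posPart)
      - ∫ x, f x ∂(ComplexMeasure.re μ).toJordanDecomposition.negPart)
    + Complex.I * ((∫ x, f x ∂(ComplexMeasure.im μ).toJordanDecomposition.posPart)
      - ∫ x, f x ∂(ComplexMeasure.im μ).toJordanDecomposition.negPart)

/-- The total variation norm of a complex measure, defined by duality against
continuous functions bounded by one. -/
def tvNorm {α : Type*} [MeasurableSpace α] [TopologicalSpace α] (μ : ComplexMeasure α) : ℝ :=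
  sSup {r | ∃ f : α → ℂ, Continuous f ∧ (∀ x, ‖f x‖ ≤ 1) ∧ r = ‖cintegral μ f‖}

/-- A complex measure is supported on a set `S` if it vanishes on measurable sets
disjoint from `S`. -/
def SupportedOn {α : Type*} [MeasurableSpace α] (μ : ComplexMeasure α) (S : Set α) : Prop :=
  ∀ t : Set α, MeasurableSet t → Disjoint t S → μ t = 0

/-- The Dirac measure at a point, as a complex measure. -/
def cdirac {α : Type*} [MeasurableSpace α] (a : α) : ComplexMeasure α :=
  (MeasureTheory.Measure.dirac a).toSignedMeasure.toComplexMeasure 0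

/-- The test function `p ↦ e^{-2πi l·(x + kτv)}`. -/
def testFn (d : ℕ) (τ : ℝ) (l : Fin d → ℤ) (k : ℤ) : PS d → ℂ :=
  fun p => Complex.exp (-(2 * (π : ℂ) * Complex.I) *
    ∑ j, (l j : ℂ) * ((p.1 j : ℂ) + (k : ℂ) * (τ : ℂ) * (p.2 j : ℂ)))

/-- The measurement `(𝒢 μ)_{l,k}`. -/
def Gmeas {d : ℕ} (τ : ℝ) (μ : ComplexMeasure (PS d)) (l : Fin d → ℤ) (k : ℤ) : ℂ :=
  cintegral μ (testFn d τ l k)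

/-- Two complex measures give the same measurements for all allowed frequencies
`‖l‖_∞ ≤ f_c` and time samples `|k| ≤ K`. -/
def SameMeas {d : ℕ} (K : ℕ) (τ : ℝ) (f_c : ℕ) (μ ν : ComplexMeasure (PS d)) : Prop :=
  ∀ l : Fin d → ℤ, (∀ j, |l j| ≤ (f_c : ℤ)) → ∀ k : ℤ, |k| ≤ (K : ℤ) →
    Gmeas τ μ l k = Gmeas τ ν l k

/-- The set of allowed frequencies `l ∈ ℤ^d`, `‖l‖_∞ ≤ f_c`. -/
def freqSet (d : ℕ) (f_c : ℕ) : Finset (Fin d → ℤ) :=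
  Fintype.piFinset fun _ => Finset.Icc (-(f_c : ℤ)) (f_c : ℤ)

/-- A function on phase space has dynamical form. -/
def DynamicalForm (d K : ℕ) (τ : ℝ) (f_c : ℕ) (q : PS d → ℂ) : Prop :=
  ∃ c : ℤ → (Fin d → ℤ) → ℂ, ∀ p : PS d,
    q p = ∑ k ∈ Finset.Icc (-(K : ℤ)) (K : ℤ), ∑ l ∈ freqSet d f_c,
      c k l * Complex.exp ((2 * (π : ℂ) * Complex.I) *
        ∑ j, (l j : ℂ) * ((p.1 j : ℂ) + (k : ℂ) * (τ : ℂ) * (p.2 j : ℂ)))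

/-- The canonical embedding of `𝕂` (either `ℝ` or `ℂ`) into `ℂ`. -/
def toC {𝕜 : Type*} [RCLike 𝕜] (a : 𝕜) : ℂ :=
  (RCLike.re a : ℝ) + (RCLike.im a : ℝ) * Complex.I


/-- `qt` is a static dual certificate (a trigonometric polynomial with frequencies
`‖l‖_∞ ≤ f_c`) for the positions `pos` and sign values `ηC`. -/
def StaticCertificate (d f_c : ℕ) {N : ℕ} (pos : Fin N → Fin d → ℝ) (ηC : Fin N → ℂ)
    (qt : (Fin d → ℝ) → ℂ) : Prop :=
  (∃ c : (Fin d → ℤ) → ℂ, ∀ y : Fin d → ℝ,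
      qt y = ∑ l ∈ freqSet d f_c,
        c l * Complex.exp ((2 * (π : ℂ) * Complex.I) * ∑ j, (l j : ℂ) * (y j : ℂ))) ∧
  (∀ i, qt (pos i) = ηC i) ∧
  (∀ y : Fin d → ℝ, (∀ j, y j ∈ Set.Icc (0 : ℝ) 1) → y ∉ Set.range pos → ‖qt y‖ < 1)

/-!
A static certificate has modulus at most one on the cube, so the average `q` can have modulus
one only if every `q̃_k`, `k ∈ 𝒦`, does; then each position `x + kτv` is the position at time
`kτ` of some particle `i_k`. Two trajectories meeting at two distinct times coincide. Hence if
two samples share a particle, `(x, v)` is that particle; otherwise the lines `L_{i_k,k}` all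
pass through `(x, v)` and any two of them meet only there, so `(x, v)` is a ghost.
-/

lemma norm_toC {𝕜 : Type*} [RCLike 𝕜] (a : 𝕜) : ‖toC a‖ = ‖a‖ := by
  rw [toC, Complex.norm_add_mul_I, ← RCLike.sqrt_normSq_eq_norm, RCLike.normSq_apply]
  ring_nf

lemma norm_eq_one_of_norm_average_eq_one {ι 𝕜 : Type*} [RCLike 𝕜] {s : Finset ι} {z : ι → 𝕜}
    (hle : ∀ i ∈ s, ‖z i‖ ≤ 1) (havg : ‖1 / (s.card : 𝕜) * ∑ i ∈ s, z i‖ = 1) :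
    ∀ i ∈ s, ‖z i‖ = 1 := by
  by_contra! hlt
  obtain ⟨i, hi, hne⟩ := hlt
  have hcard : (0 : ℝ) < s.card := by exact_mod_cast Finset.card_pos.mpr ⟨i, hi⟩
  have hsum : ‖∑ i ∈ s, z i‖ < s.card :=
    calc ‖∑ i ∈ s, z i‖ ≤ ∑ i ∈ s, ‖z i‖ := norm_sum_le _ _
      _ < ∑ _i ∈ s, (1 : ℝ) :=
        Finset.sum_lt_sum hle ⟨i, hi, lt_of_le_of_ne (hle i hi) hne⟩
      _ = s.card := by simp
  rw [norm_mul, norm_div, norm_one, RCLike.norm_natCast, div_mul_eq_mul_div, one_mul,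
    div_eq_one_iff_eq hcard.ne'] at havg
  exact hsum.ne havg

namespace StaticCertificate

variable {d f_c N : ℕ} {pos : Fin N → Fin d → ℝ} {ηC : Fin N → ℂ} {qt : (Fin d → ℝ) → ℂ}
  {y : Fin d → ℝ}

lemma norm_le_one (h : StaticCertificate d f_c pos ηC qt) (hη : ∀ i, ‖ηC i‖ = 1)
    (hy : ∀ j, y j ∈ Set.Icc (0 : ℝ) 1) : ‖qt y‖ ≤ 1 := by
  by_cases hr : y ∈ Set.range pos
  · obtain ⟨i, rfl⟩ := hr
    rw [h.2.1 i, hη i]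
  · exact (h.2.2 y hy hr).le

lemma mem_range_of_norm_eq_one (h : StaticCertificate d f_c pos ηC qt)
    (hy : ∀ j, y j ∈ Set.Icc (0 : ℝ) 1) (h1 : ‖qt y‖ = 1) : y ∈ Set.range pos := by
  by_contra hr
  exact (h.2.2 y hy hr).ne h1

end StaticCertificate

def positionAt {d : ℕ} (t : ℝ) (p : PS d) : Fin d → ℝ :=
  fun j => p.1 j + t * p.2 j

lemma eq_of_positionAt_eq {d : ℕ} {a b : PS d} {t₁ t₂ : ℝ} (ht : t₁ ≠ t₂)
    (h₁ : positionAt t₁ a = positionAt t₁ b) (h₂ : positionAt t₂ a = positionAt t₂ b) :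
    a = b := by
  simp only [positionAt, funext_iff] at h₁ h₂
  have hv : a.2 = b.2 := funext fun j => by
    have h : (t₁ - t₂) * (a.2 j - b.2 j) = 0 := by linear_combination h₁ j - h₂ j
    linarith [(mul_eq_zero.mp h).resolve_left (sub_ne_zero.mpr ht)]
  have hx : a.1 = b.1 := funext fun j => by linear_combination h₁ j - t₁ * congrFun hv j
  exact Prod.ext hx hv

lemma mem_Lset_iff {d K : ℕ} {τ : ℝ} {p₀ p : PS d} {k : ℤ} :
    p ∈ Lset d K τ p₀ k ↔
      p ∈ Omega d K τ ∧ positionAt ((k : ℝ) * τ) p = positionAt ((k : ℝ) * τ) p₀ := by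
  simp only [Lset, Set.mem_sep_iff, positionAt, funext_iff]
  refine and_congr_right fun _ => forall_congr' fun j => ?_
  constructor <;> intro h <;> linear_combination h

lemma eq_or_isGhost_of_positionAt_eq {d K N : ℕ} {τ : ℝ} (hτ : τ ≠ 0) {P : Fin N → PS d}
    {Ks : Finset ℤ} (hcard : 2 ≤ Ks.card) {p : PS d} (hp : p ∈ Omega d K τ) {ι : ℤ → Fin N}
    (hι : ∀ k ∈ Ks, positionAt ((k : ℝ) * τ) (P (ι k)) = positionAt ((k : ℝ) * τ) p) :
    (∃ i, p = P i) ∨ IsGhost (K := K) τ P Ks p := by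
  have htime : ∀ {k₁ k₂ : ℤ}, k₁ ≠ k₂ → (k₁ : ℝ) * τ ≠ (k₂ : ℝ) * τ := fun hne =>
    (mul_left_injective₀ hτ).ne (Int.cast_injective.ne hne)
  by_cases hinj : Set.InjOn ι (Ks : Set ℤ)
  · refine Or.inr ⟨hp, ι, hinj, Set.eq_singleton_iff_unique_mem.mpr ⟨?_, fun p' hp' => ?_⟩⟩
    · exact Set.mem_iInter₂.mpr fun k hk => mem_Lset_iff.mpr ⟨hp, (hι k hk).symm⟩
    · obtain ⟨k₁, hk₁, k₂, hk₂, hne⟩ := Finset.one_lt_card.mp hcard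
      have hL := Set.mem_iInter₂.mp hp'
      exact eq_of_positionAt_eq (htime hne)
        ((mem_Lset_iff.mp (hL k₁ hk₁)).2.trans (hι k₁ hk₁))
        ((mem_Lset_iff.mp (hL k₂ hk₂)).2.trans (hι k₂ hk₂))
  · obtain ⟨k₁, hk₁, k₂, hk₂, hιeq, hne⟩ : ∃ k₁ ∈ Ks, ∃ k₂ ∈ Ks, ι k₁ = ι k₂ ∧ k₁ ≠ k₂ := by
      simpa [Set.InjOn] using hinj
    refine Or.inl ⟨ι k₁, eq_of_positionAt_eq (htime hne) (hι k₁ hk₁).symm ?_⟩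
    rw [hιeq]
    exact (hι k₂ hk₂).symm

theorem average_certificate_unit_modulus_iff_particle_or_ghost_general
    {d K N : ℕ} (τ : ℝ) (hτ : 0 < τ) (f_c : ℕ)
    (Ks : Finset ℤ) (hKs : Ks ⊆ Finset.Icc (-(K : ℤ)) (K : ℤ)) (hcard : 3 ≤ Ks.card)
    (x v : Fin N → Fin d → ℝ)
    {𝕜 : Type*} [RCLike 𝕜]
    (η : Fin N → 𝕜) (hη : ∀ i, ‖η i‖ = 1)
    (qt : ℤ → (Fin d → ℝ) → ℂ)
    (hqt : ∀ k ∈ Ks, StaticCertificate d f_c (fun i j => x i j + (k : ℝ) * τ * v i j)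
        (fun i => toC (η i)) (qt k))
    (q : PS d → ℂ)
    (hq : ∀ p : PS d,
      q p = (1 / (Ks.card : ℂ)) * ∑ k ∈ Ks, qt k (fun j => p.1 j + (k : ℝ) * τ * p.2 j)) :
    ∀ p ∈ Omega d K τ, ‖q p‖ = 1 →
      (∃ i, p = ((x i, v i) : PS d)) ∨
        IsGhost (K := K) τ (fun i => ((x i, v i) : PS d)) Ks p := by
  intro p hp hnorm
  have hcube : ∀ k ∈ Ks, ∀ j, positionAt ((k : ℝ) * τ) p j ∈ Set.Icc (0 : ℝ) 1 :=
    fun k hk => hp k (abs_le.mpr (Finset.mem_Icc.mp (hKs hk)))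
  have hunit : ∀ k ∈ Ks, ‖qt k (positionAt ((k : ℝ) * τ) p)‖ = 1 :=
    norm_eq_one_of_norm_average_eq_one
      (fun k hk => (hqt k hk).norm_le_one (fun i => (norm_toC _).trans (hη i)) (hcube k hk))
      (hq p ▸ hnorm)
  have hhit : ∀ k ∈ Ks, ∃ i,
      positionAt ((k : ℝ) * τ) ((x i, v i) : PS d) = positionAt ((k : ℝ) * τ) p :=
    fun k hk => (hqt k hk).mem_range_of_norm_eq_one (hcube k hk) (hunit k hk)
  obtain ⟨k₀, hk₀⟩ := Finset.card_pos.mp (by omega : 0 < Ks.card)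
  have : Nonempty (Fin N) := ⟨(hhit k₀ hk₀).choose⟩
  choose! ι hι using hhit
  exact eq_or_isGhost_of_positionAt_eq hτ.ne' (by omega) hp hι

/-- If `q` is the `𝒦`-static average certificate built from static dual
certificates `q̃_k`, then any point of `Ω` where `|q| = 1` is either a particle of the
configuration or a ghost particle with respect to `𝒦`. -/
theorem average_certificate_unit_modulus_iff_particle_or_ghost
    {d K N : ℕ} (hd : 1 ≤ d) (τ : ℝ) (hτ : 0 < τ) (f_c : ℕ)
    (Ks : Finset ℤ) (hKs : Ks ⊆ Finset.Icc (-(K : ℤ)) (K : ℤ)) (hcard : 3 ≤ Ks.card)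
    (x v : Fin N → Fin d → ℝ)
    (hmem : ∀ i, ((x i, v i) : PS d) ∈ Omega d K τ)
    (hdist : Function.Injective fun i => ((x i, v i) : PS d))
    {𝕜 : Type*} [RCLike 𝕜]
    (η : Fin N → 𝕜) (hη : ∀ i, ‖η i‖ = 1)
    (qt : ℤ → (Fin d → ℝ) → ℂ)
    (hqt : ∀ k ∈ Ks, StaticCertificate d f_c (fun i j => x i j + (k : ℝ) * τ * v i j)
        (fun i => toC (η i)) (qt k))
    (q : PS d → ℂ)
    (hq : ∀ p : PS d,
      q p = (1 / (Ks.card : ℂ)) * ∑ k ∈ Ks, qt k (fun j => p.1 j + (k : ℝ) * τ * p.2 j)) :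
    ∀ p ∈ Omega d K τ, ‖q p‖ = 1 →
      (∃ i, p = ((x i, v i) : PS d)) ∨
        IsGhost (K := K) τ (fun i => ((x i, v i) : PS d)) Ks p :=
  average_certificate_unit_modulus_iff_particle_or_ghost_general τ hτ f_c Ks hKs hcard x v η hη qt
    hqt q hq

end
end

section
/- Let 𝒦 ⊆ {−K,…,K} with |𝒦| ≥ 3. Let (x_1,v_1),…,(x_N,v_N) be independent Ω-valued random variables whose laws μ_1,…,μ_N are absolutely continuous with respect to the Lebesgue measure on ℝ^{2d}. Then, almost surely, the random configuration {(x_i,v_i)}_{i=1}^N admits no ghost particle with respect to 𝒦. -/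
open MeasureTheory Complex Real Set

noncomputable section

/-! If `g` is a ghost for the time samples `k₁, k₂, k₃`, realised by distinct particles `p₁, p₂, p₃`,
then in every coordinate the three points `(kᵢ, xᵢ + kᵢτvᵢ)` lie on the line `k ↦ g.1 + kτ g.2`, so
they are collinear. Given `p₁` and `p₂`, collinearity is a nontrivial affine equation in `p₃`, whose
solution set is a Lebesgue-null hyperplane of phase space. By independence and absolute continuity
the event has probability zero, and there are only countably many choices of particles and time
samples. -/

theorem MeasureTheory.Measure.addHaar_preimage_singleton_of_ne_zero {E : Type*}
    [NormedAddCommGroup E] [NormedSpace ℝ E] [MeasurableSpace E] [BorelSpace E]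
    [FiniteDimensional ℝ E] (μ : Measure E) [μ.IsAddHaarMeasure] {L : E →ₗ[ℝ] ℝ} (hL : L ≠ 0)
    (c : ℝ) : μ (L ⁻¹' {c}) = 0 := by
  have hcoe : ((AffineSubspace.mk' c ⊥).comap L.toAffineMap : Set E) = L ⁻¹' {c} := by
    ext x; simp [sub_eq_zero]
  rw [← hcoe]
  refine Measure.addHaar_affineSubspace μ _ fun htop => hL ?_
  have hL_eq : ∀ x, L x = c := fun x => by
    have hx : x ∈ (AffineSubspace.mk' c ⊥).comap L.toAffineMap :=
      htop ▸ AffineSubspace.mem_top ℝ E x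
    simpa [sub_eq_zero] using hx
  ext x
  simpa [← hL_eq 0] using hL_eq x

theorem ProbabilityTheory.IndepFun.measure_preimage_eq_zero_of_slices {Ω α β : Type*}
    [MeasurableSpace Ω] [MeasurableSpace α] [MeasurableSpace β] {μ : Measure Ω}
    [IsFiniteMeasure μ] {ν : Measure β} {Y : Ω → α} {Z : Ω → β} (hYZ : IndepFun Y Z μ)
    (hY : Measurable Y) (hZ : Measurable Z) (hZν : Measure.map Z μ ≪ ν) {S : Set (α × β)}
    (hS : MeasurableSet S) (hslice : ∀ y, ν (Prod.mk y ⁻¹' S) = 0) :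
    μ ((fun ω => (Y ω, Z ω)) ⁻¹' S) = 0 := by
  rw [← Measure.map_apply (hY.prodMk hZ) hS,
    hYZ.map_prod_eq_prod_map_map hY.aemeasurable hZ.aemeasurable, Measure.prod_apply hS]
  simp [fun y => hZν (hslice y)]

section GhostParticles

variable {d : ℕ} {τ : ℝ}

instance : (volume : Measure (PS d)).IsAddHaarMeasure :=
  Measure.prod.instIsAddHaarMeasure _ _

def trajectory (τ : ℝ) (k : ℤ) (p : PS d) (j : Fin d) : ℝ :=
  p.1 j + k * τ * p.2 j

/-- Twice the signed area of the triangle with vertices `(kᵢ, trajectory τ kᵢ pᵢ j)`: it vanishes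
exactly when these three points of the plane are collinear. -/
def collinearityDefect (τ : ℝ) (j : Fin d) (k₁ k₂ k₃ : ℤ) (p₁ p₂ p₃ : PS d) : ℝ :=
  (k₃ - k₂) * trajectory τ k₁ p₁ j + (k₁ - k₃) * trajectory τ k₂ p₂ j
    + (k₂ - k₁) * trajectory τ k₃ p₃ j

theorem trajectory_eq_of_mem_Lset {K : ℕ} {p₀ g : PS d} {k : ℤ}
    (hg : g ∈ Lset d K τ p₀ k) : trajectory τ k p₀ = trajectory τ k g := by
  funext j
  unfold trajectory
  linear_combination -hg.2 j

/-- The samples `trajectory τ kᵢ pᵢ j` all lie on the line `k ↦ g.1 j + k τ g.2 j`. -/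
theorem collinearityDefect_eq_zero_of_mem_Lset {K : ℕ} {p₁ p₂ p₃ g : PS d} {k₁ k₂ k₃ : ℤ}
    (h₁ : g ∈ Lset d K τ p₁ k₁) (h₂ : g ∈ Lset d K τ p₂ k₂) (h₃ : g ∈ Lset d K τ p₃ k₃)
    (j : Fin d) : collinearityDefect τ j k₁ k₂ k₃ p₁ p₂ p₃ = 0 := by
  rw [collinearityDefect, trajectory_eq_of_mem_Lset h₁, trajectory_eq_of_mem_Lset h₂,
    trajectory_eq_of_mem_Lset h₃, trajectory, trajectory, trajectory]
  ring

theorem volume_collinearityDefect_eq_zero (j : Fin d) {k₁ k₂ : ℤ} (hk : k₁ ≠ k₂) (k₃ : ℤ)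
    (p₁ p₂ : PS d) : volume {p₃ | collinearityDefect τ j k₁ k₂ k₃ p₁ p₂ p₃ = 0} = 0 := by
  let L : PS d →ₗ[ℝ] ℝ := (k₂ - k₁ : ℝ) • ((LinearMap.proj j).comp (LinearMap.fst ℝ _ _)
    + (k₃ * τ : ℝ) • (LinearMap.proj j).comp (LinearMap.snd ℝ _ _))
  have hL : L ≠ 0 := fun h => by
    have h₀ := LinearMap.congr_fun h (Pi.single j 1, 0)
    simp [L, sub_eq_zero, hk.symm] at h₀
  have hset : {p₃ | collinearityDefect τ j k₁ k₂ k₃ p₁ p₂ p₃ = 0}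
      = L ⁻¹' {-((k₃ - k₂) * trajectory τ k₁ p₁ j + (k₁ - k₃) * trajectory τ k₂ p₂ j)} := by
    ext p₃
    simp only [collinearityDefect, trajectory, mem_ofPred_eq, mem_preimage, mem_singleton_iff,
      L, LinearMap.add_apply, LinearMap.smul_apply, LinearMap.coe_comp, LinearMap.coe_proj,
      LinearMap.coe_fst, LinearMap.coe_snd, Function.comp_apply, Function.eval, smul_eq_mul]
    constructor <;> intro h <;> linear_combination h
  rw [hset]
  exact Measure.addHaar_preimage_singleton_of_ne_zero volume hL _

theorem measure_collinearityDefect_eq_zero {N : ℕ} {Θ : Type*} [MeasurableSpace Θ]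
    {ℙ : Measure Θ} [IsProbabilityMeasure ℙ] {X : Fin N → Θ → PS d}
    (hX : ∀ i, Measurable (X i)) (hindep : ProbabilityTheory.iIndepFun X ℙ)
    (hac : ∀ i, ℙ.map (X i) ≪ volume) (j : Fin d) {i₁ i₂ i₃ : Fin N} (h₁₃ : i₁ ≠ i₃)
    (h₂₃ : i₂ ≠ i₃) {k₁ k₂ : ℤ} (hk : k₁ ≠ k₂) (k₃ : ℤ) :
    ℙ {θ | collinearityDefect τ j k₁ k₂ k₃ (X i₁ θ) (X i₂ θ) (X i₃ θ) = 0} = 0 := by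
  have hmeas : Measurable fun q : (PS d × PS d) × PS d =>
      collinearityDefect τ j k₁ k₂ k₃ q.1.1 q.1.2 q.2 := by
    unfold collinearityDefect trajectory
    fun_prop
  exact (hindep.indepFun_prodMk hX i₁ i₂ i₃ h₁₃ h₂₃).measure_preimage_eq_zero_of_slices
    ((hX i₁).prodMk (hX i₂)) (hX i₃) (hac i₃) (hmeas (measurableSet_singleton 0))
    fun y => volume_collinearityDefect_eq_zero j hk k₃ y.1 y.2

theorem IsGhost.exists_collinearityDefect_eq_zero {K N : ℕ} {P : Fin N → PS d} {Ks : Finset ℤ}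
    {g : PS d} (hg : IsGhost (K := K) τ P Ks g) (hKs : 3 ≤ Ks.card) (j : Fin d) :
    ∃ i₁ i₂ i₃ : Fin N, ∃ k₁ k₂ k₃ : ℤ, i₁ ≠ i₃ ∧ i₂ ≠ i₃ ∧ k₁ ≠ k₂ ∧
      collinearityDefect τ j k₁ k₂ k₃ (P i₁) (P i₂) (P i₃) = 0 := by
  obtain ⟨-, ι, hι, hinter⟩ := hg
  obtain ⟨k₁, hk₁, k₂, hk₂, k₃, hk₃, h₁₂, h₁₃, h₂₃⟩ := Finset.two_lt_card.1 hKs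
  have hmem : ∀ k ∈ Ks, g ∈ Lset d K τ (P (ι k)) k := fun k hk =>
    Set.mem_iInter₂.1 (hinter ▸ Set.mem_singleton g) k hk
  exact ⟨ι k₁, ι k₂, ι k₃, k₁, k₂, k₃, hι.ne hk₁ hk₃ h₁₃, hι.ne hk₂ hk₃ h₂₃, h₁₂,
    collinearityDefect_eq_zero_of_mem_Lset (hmem k₁ hk₁) (hmem k₂ hk₂) (hmem k₃ hk₃) j⟩

end GhostParticles

theorem no_ghost_particles_almost_surely_general
    {d K N : ℕ} (hd : 1 ≤ d) (τ : ℝ)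
    (Ks : Finset ℤ) (hcard : 3 ≤ Ks.card)
    {Θ : Type*} [MeasurableSpace Θ] (ℙ : MeasureTheory.Measure Θ) [IsProbabilityMeasure ℙ]
    (X : Fin N → Θ → PS d)
    (hXmeas : ∀ i, Measurable (X i))
    (hindep : ProbabilityTheory.iIndepFun X ℙ)
    (hac : ∀ i, MeasureTheory.Measure.map (X i) ℙ ≪ (volume : Measure (PS d))) :
    ∀ᵐ θ ∂ℙ, ∀ g : PS d, ¬ IsGhost (K := K) τ (fun i => X i θ) Ks g := by
  let j : Fin d := ⟨0, hd⟩
  have hgeneric : ∀ᵐ θ ∂ℙ, ∀ i₁ i₂ i₃ : Fin N, ∀ k₁ k₂ k₃ : ℤ, i₁ ≠ i₃ → i₂ ≠ i₃ → k₁ ≠ k₂ →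
      collinearityDefect τ j k₁ k₂ k₃ (X i₁ θ) (X i₂ θ) (X i₃ θ) ≠ 0 := by
    simp only [ae_all_iff, Filter.eventually_imp_distrib_left]
    intro i₁ i₂ i₃ k₁ k₂ k₃ h₁₃ h₂₃ hk
    simpa only [ae_iff, not_not] using
      measure_collinearityDefect_eq_zero hXmeas hindep hac j h₁₃ h₂₃ hk k₃
  filter_upwards [hgeneric] with θ hθ g hg
  obtain ⟨i₁, i₂, i₃, k₁, k₂, k₃, h₁₃, h₂₃, hk, hzero⟩ :=
    hg.exists_collinearityDefect_eq_zero hcard j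
  exact hθ i₁ i₂ i₃ k₁ k₂ k₃ h₁₃ h₂₃ hk hzero

/-- If the particles are independent random variables with laws absolutely
continuous with respect to Lebesgue measure and supported in `Ω`, then almost surely the
random configuration admits no ghost particle with respect to `𝒦` (with `|𝒦| ≥ 3`). -/
theorem no_ghost_particles_almost_surely
    {d K N : ℕ} (hd : 1 ≤ d) (τ : ℝ) (hτ : 0 < τ)
    (Ks : Finset ℤ) (hKs : Ks ⊆ Finset.Icc (-(K : ℤ)) (K : ℤ)) (hcard : 3 ≤ Ks.card)
    {Θ : Type*} [MeasurableSpace Θ] (ℙ : MeasureTheory.Measure Θ) [IsProbabilityMeasure ℙ]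
    (X : Fin N → Θ → PS d)
    (hXmeas : ∀ i, Measurable (X i))
    (hindep : ProbabilityTheory.iIndepFun X ℙ)
    (hac : ∀ i, MeasureTheory.Measure.map (X i) ℙ ≪ (volume : Measure (PS d)))
    (hsupp : ∀ i, MeasureTheory.Measure.map (X i) ℙ (Omega d K τ)ᶜ = 0) :
    ∀ᵐ θ ∂ℙ, ∀ g : PS d, ¬ IsGhost (K := K) τ (fun i => X i θ) Ks g :=
  no_ghost_particles_almost_surely_general hd τ Ks hcard ℙ X hXmeas hindep hac

end
end

section
/- Let 𝒦 ⊆ {−K,…,K} with |𝒦| ≥ 3, let T be a configuration of particles in Ω admitting no ghost particle with respect to 𝒦, and let μ be a probability measure supported in Ω that is absolutely continuous with respect to the Lebesgue measure on ℝ^{2d}. Then μ({P ∈ Ω : the configuration T ∪ {P} admits at least one ghost particle with respect to 𝒦}) = 0. -/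
open MeasureTheory Complex Real Set

noncomputable section

/-!
Since `T` has no ghost, a ghost `g` of `T ∪ {p}` must use `p` at some sample `k₀`, and, as
`|𝒦| ≥ 3`, two old particles at distinct samples `ka ≠ kb`. In a fixed coordinate these two
determine the affine trajectory `t ↦ g.1 j + t g.2 j`, hence its value at time `k₀τ`, which `p`
must share. So `p` lies on one of countably many hyperplanes `x_j + k₀τ v_j = c`, each
Lebesgue-null.
-/

lemma addHaar_preimage_singleton_eq_zero {E : Type*} [NormedAddCommGroup E] [NormedSpace ℝ E]
    [MeasurableSpace E] [BorelSpace E] [FiniteDimensional ℝ E] (μ : Measure E)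
    [μ.IsAddHaarMeasure] {f : E →ₗ[ℝ] ℝ} (hf : f ≠ 0) (c : ℝ) : μ (f ⁻¹' {c}) = 0 := by
  let s := AffineSubspace.comap f.toAffineMap (AffineSubspace.mk' c ⊥)
  have hs : (s : Set E) = f ⁻¹' {c} := by
    ext x
    simp [s, AffineSubspace.mem_mk', sub_eq_zero]
  rw [← hs]
  refine Measure.addHaar_affineSubspace μ s fun htop => hf (LinearMap.ext fun x => ?_)
  have hmem : ∀ y : E, f y = c := fun y => by
    have hy : y ∈ (s : Set E) := htop ▸ AffineSubspace.mem_top ℝ E y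
    simpa [hs] using hy
  simpa [← hmem 0] using hmem x

def posAt {d : ℕ} (q : PS d) (t : ℝ) (j : Fin d) : ℝ :=
  q.1 j + t * q.2 j

lemma posAt_eq_of_ne {d : ℕ} (q : PS d) (j : Fin d) {s t : ℝ} (hst : s ≠ t) (u : ℝ) :
    posAt q u j = posAt q s j + (u - s) * (posAt q s j - posAt q t j) / (s - t) := by
  unfold posAt
  field_simp [sub_ne_zero.2 hst]
  ring

lemma volume_setOf_posAt_eq {d : ℕ} (j : Fin d) (t c : ℝ) :
    volume {p : PS d | posAt p t j = c} = 0 := by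
  have : (volume : Measure (PS d)).IsAddHaarMeasure := Measure.prod.instIsAddHaarMeasure _ _
  let f : PS d →ₗ[ℝ] ℝ :=
    LinearMap.proj j ∘ₗ LinearMap.fst ℝ _ _ + t • (LinearMap.proj j ∘ₗ LinearMap.snd ℝ _ _)
  have hf : f ≠ 0 := fun h => by
    simpa [f] using LinearMap.congr_fun h (Pi.single j 1, 0)
  convert addHaar_preimage_singleton_eq_zero volume hf c using 2
  ext p
  simp [f, posAt]

lemma posAt_eq_of_mem_Lset {d K : ℕ} {τ : ℝ} {g q : PS d} {k : ℤ} (hg : g ∈ Lset d K τ q k)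
    (j : Fin d) : posAt g (k * τ) j = posAt q (k * τ) j := by
  unfold posAt
  linarith [hg.2 j]

lemma Finset.exists_two_map_ne_of_injOn {α β : Type*} {s : Finset α} {f : α → β}
    (hf : Set.InjOn f s) (b : β) (hs : 3 ≤ s.card) :
    ∃ a ∈ s, ∃ a' ∈ s, a ≠ a' ∧ f a ≠ b ∧ f a' ≠ b := by
  classical
  have hle : (s.filter (f · = b)).card ≤ 1 :=
    Finset.card_le_one.2 fun a ha a' ha' => by
      simp only [Finset.mem_filter] at ha ha'
      exact hf ha.1 ha'.1 (ha.2.trans ha'.2.symm)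
  have htwo : 1 < (s.filter fun a => ¬f a = b).card := by
    have := Finset.card_filter_add_card_filter_not (s := s) (p := (f · = b))
    omega
  obtain ⟨a, ha, a', ha', hne⟩ := Finset.one_lt_card.1 htwo
  simp only [Finset.mem_filter] at ha ha'
  exact ⟨a, ha.1, a', ha'.1, hne, ha.2, ha'.2⟩

lemma isGhost_of_isGhost_snoc {d K N : ℕ} {τ : ℝ} {P : Fin N → PS d} {p g : PS d}
    {Ks : Finset ℤ} (hKs : Ks.Nonempty) {ι : ℤ → Fin (N + 1)} (hg : g ∈ Omega d K τ)
    (hinj : Set.InjOn ι Ks)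
    (hcap : ⋂ k ∈ Ks, Lset d K τ (Fin.snoc (α := fun _ => PS d) P p (ι k)) k = {g})
    (hne : ∀ k ∈ Ks, ι k ≠ Fin.last N) : IsGhost (K := K) τ P Ks g := by
  classical
  obtain ⟨k₁, hk₁⟩ := hKs
  let ι' : ℤ → Fin N := fun k =>
    if h : ι k = Fin.last N then (ι k₁).castPred (hne k₁ hk₁) else (ι k).castPred h
  have hι' : ∀ k ∈ Ks, (ι' k).castSucc = ι k := fun k hk => by
    simp [ι', hne k hk]
  refine ⟨hg, ι', fun k hk k' hk' h => hinj hk hk' ?_, ?_⟩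
  · rw [← hι' k hk, ← hι' k' hk', h]
  · rw [← hcap]
    refine Set.iInter₂_congr fun k hk => ?_
    rw [← hι' k hk, Fin.snoc_castSucc]

lemma exists_mem_Lset_of_isGhost_snoc {d K N : ℕ} {τ : ℝ} {P : Fin N → PS d} {p g : PS d}
    {Ks : Finset ℤ} (hcard : 3 ≤ Ks.card) (hP : ¬ IsGhost (K := K) τ P Ks g)
    (hg : IsGhost (K := K) τ (Fin.snoc P p) Ks g) :
    ∃ k₀ ka kb : ℤ, ka ≠ kb ∧ ∃ ia ib : Fin N, g ∈ Lset d K τ p k₀ ∧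
      g ∈ Lset d K τ (P ia) ka ∧ g ∈ Lset d K τ (P ib) kb := by
  obtain ⟨hgΩ, ι, hinj, hcap⟩ := hg
  have hmem : ∀ k ∈ Ks, g ∈ Lset d K τ (Fin.snoc (α := fun _ => PS d) P p (ι k)) k :=
    fun k hk => Set.mem_iInter₂.1 (hcap.symm ▸ Set.mem_singleton g) k hk
  have hlast : ∃ k₀ ∈ Ks, ι k₀ = Fin.last N := by
    by_contra! hne
    exact hP (isGhost_of_isGhost_snoc (Finset.card_pos.1 (by omega)) hgΩ hinj hcap hne)
  obtain ⟨k₀, hk₀, hk₀last⟩ := hlast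
  obtain ⟨ka, hka, kb, hkb, hab, ha, hb⟩ :=
    Finset.exists_two_map_ne_of_injOn hinj (Fin.last N) hcard
  refine ⟨k₀, ka, kb, hab, (ι ka).castPred ha, (ι kb).castPred hb, ?_, ?_, ?_⟩
  · simpa [hk₀last] using hmem k₀ hk₀
  · simpa [← Fin.snoc_castSucc (α := fun _ => PS d) p P] using hmem ka hka
  · simpa [← Fin.snoc_castSucc (α := fun _ => PS d) p P] using hmem kb hkb

theorem adding_particle_creates_ghost_is_null_general
    {d K N : ℕ} (hd : 1 ≤ d) (τ : ℝ) (hτ : 0 < τ)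
    (Ks : Finset ℤ) (hcard : 3 ≤ Ks.card)
    (P : Fin N → PS d)
    (hghost : ∀ g : PS d, ¬ IsGhost (K := K) τ P Ks g)
    (μ : MeasureTheory.Measure (PS d))
    (hac : μ ≪ (volume : Measure (PS d))) :
    μ {p : PS d | p ∈ Omega d K τ ∧
        ∃ g : PS d, IsGhost (K := K) τ (Fin.snoc P p) Ks g} = 0 := by
  let j : Fin d := ⟨0, hd⟩
  -- the position at time `k₀τ` of the trajectory through two old particles at times `kaτ`, `kbτ`
  let level : ℤ × ℤ × ℤ × Fin N × Fin N → ℝ := fun ⟨k₀, ka, kb, ia, ib⟩ =>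
    posAt (P ia) (ka * τ) j + (k₀ * τ - ka * τ) *
      (posAt (P ia) (ka * τ) j - posAt (P ib) (kb * τ) j) / (ka * τ - kb * τ)
  refine measure_mono_null ?_ <| measure_iUnion_null fun q =>
    hac (volume_setOf_posAt_eq j (q.1 * τ) (level q))
  rintro p ⟨-, g, hg⟩
  obtain ⟨k₀, ka, kb, hab, ia, ib, hp, ha, hb⟩ :=
    exists_mem_Lset_of_isGhost_snoc hcard (hghost g) hg
  have hτab : (ka : ℝ) * τ ≠ kb * τ :=
    (mul_left_injective₀ hτ.ne').ne (Int.cast_injective.ne hab)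
  refine Set.mem_iUnion.2 ⟨(k₀, ka, kb, ia, ib), ?_⟩
  calc posAt p (k₀ * τ) j = posAt g (k₀ * τ) j := (posAt_eq_of_mem_Lset hp j).symm
    _ = level (k₀, ka, kb, ia, ib) := by
      rw [posAt_eq_of_ne g j hτab, posAt_eq_of_mem_Lset ha, posAt_eq_of_mem_Lset hb]

/-- If a configuration `T` admits no ghost particle, then for any
absolutely continuous probability measure `μ` supported in `Ω`, the set of new particles
`P` whose addition to `T` creates a ghost particle is `μ`-null. -/
theorem adding_particle_creates_ghost_is_null
    {d K N : ℕ} (hd : 1 ≤ d) (τ : ℝ) (hτ : 0 < τ)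
    (Ks : Finset ℤ) (hKs : Ks ⊆ Finset.Icc (-(K : ℤ)) (K : ℤ)) (hcard : 3 ≤ Ks.card)
    (P : Fin N → PS d) (hmem : ∀ i, P i ∈ Omega d K τ) (hdist : Function.Injective P)
    (hghost : ∀ g : PS d, ¬ IsGhost (K := K) τ P Ks g)
    (μ : MeasureTheory.Measure (PS d)) [IsProbabilityMeasure μ]
    (hac : μ ≪ (volume : Measure (PS d))) (hsupp : μ (Omega d K τ)ᶜ = 0) :
    μ {p : PS d | p ∈ Omega d K τ ∧
        ∃ g : PS d, IsGhost (K := K) τ (Fin.snoc P p) Ks g} = 0 :=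
  adding_particle_creates_ghost_is_null_general hd τ hτ Ks hcard P hghost μ hac

end
end

section
/- Let 𝒦 ⊆ {−K,…,K} with |𝒦| ≥ 3 and let T be a configuration of particles in Ω. Then the set of potential ghost particles of T, namely ∪_{P ∈ Ω} G(T ∪ {P}), where G(T') denotes the set of ghost particles of the configuration T' with respect to 𝒦, is a finite set. -/
open MeasureTheory Complex Real Set

noncomputable section

/-- Subtracting the two line equations leaves `(k₁ - k₂) τ (v - v') = 0`. -/
theorem Lset_inter_subsingleton {d K : ℕ} {τ : ℝ} (hτ : τ ≠ 0) (p₁ p₂ : PS d) {k₁ k₂ : ℤ}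
    (hk : k₁ ≠ k₂) : (Lset d K τ p₁ k₁ ∩ Lset d K τ p₂ k₂).Subsingleton := by
  rintro g ⟨⟨-, hg₁⟩, ⟨-, hg₂⟩⟩ g' ⟨⟨-, hg₁'⟩, ⟨-, hg₂'⟩⟩
  have hk' : ((k₁ : ℝ) - k₂) * τ ≠ 0 := mul_ne_zero (sub_ne_zero.mpr (mod_cast hk)) hτ
  have hv : ∀ j, g.2 j = g'.2 j := fun j =>
    sub_eq_zero.mp <| (mul_eq_zero.mp <| by
      linear_combination hg₁ j - hg₂ j - hg₁' j + hg₂' j).resolve_left hk'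
  have hx : ∀ j, g.1 j = g'.1 j := fun j => by
    linear_combination hg₁ j - hg₁' j - (k₁ : ℝ) * τ * hv j
  exact Prod.ext (funext hx) (funext hv)

theorem Finset.exists_ne_ne_of_injOn {α β : Type*} {s : Finset α} {f : α → β}
    (hf : Set.InjOn f s) (hs : 2 < s.card) (b : β) :
    ∃ a₁ ∈ s, ∃ a₂ ∈ s, a₁ ≠ a₂ ∧ f a₁ ≠ b ∧ f a₂ ≠ b := by
  classical
  have hfiber : (s.filter (f · = b)).card ≤ 1 :=
    Finset.card_le_one.mpr fun a ha a' ha' => by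
      simp only [Finset.mem_filter] at ha ha'
      exact hf ha.1 ha'.1 (ha.2.trans ha'.2.symm)
  have hrest : 1 < (s.filter fun a => ¬f a = b).card := by
    have := Finset.card_filter_add_card_filter_not (s := s) (p := (f · = b))
    omega
  obtain ⟨a₁, ha₁, a₂, ha₂, hne⟩ := Finset.one_lt_card.mp hrest
  rw [Finset.mem_filter] at ha₁ ha₂
  exact ⟨a₁, ha₁.1, a₂, ha₂.1, hne, ha₁.2, ha₂.2⟩

/-- Since `ι` is injective on `Ks`, the added particle `p` serves at most one time sample. -/
theorem IsGhost.exists_mem_Lset_inter {d K N : ℕ} {τ : ℝ} {Ks : Finset ℤ} (hcard : 3 ≤ Ks.card)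
    {P : Fin N → PS d} {p g : PS d} (hg : IsGhost (K := K) τ (Fin.snoc P p) Ks g) :
    ∃ k₁ ∈ Ks, ∃ k₂ ∈ Ks, k₁ ≠ k₂ ∧ ∃ i₁ i₂,
      g ∈ Lset d K τ (P i₁) k₁ ∩ Lset d K τ (P i₂) k₂ := by
  obtain ⟨-, ι, hinj, hI⟩ := hg
  have hmem : ∀ k ∈ Ks, g ∈ Lset d K τ ((Fin.snoc P p : Fin (N + 1) → PS d) (ι k)) k := fun k hk =>
    Set.mem_iInter₂.mp (hI ▸ Set.mem_singleton g) k hk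
  obtain ⟨k₁, hk₁, k₂, hk₂, hne, hι₁, hι₂⟩ := Finset.exists_ne_ne_of_injOn hinj hcard (Fin.last N)
  obtain ⟨i₁, hi₁⟩ := Fin.exists_castSucc_eq.mpr hι₁
  obtain ⟨i₂, hi₂⟩ := Fin.exists_castSucc_eq.mpr hι₂
  refine ⟨k₁, hk₁, k₂, hk₂, hne, i₁, i₂, ?_, ?_⟩
  · simpa only [← hi₁, Fin.snoc_castSucc] using hmem k₁ hk₁
  · simpa only [← hi₂, Fin.snoc_castSucc] using hmem k₂ hk₂

theorem potential_ghost_particles_finite_general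
    {d K N : ℕ} (τ : ℝ) (hτ : 0 < τ)
    (Ks : Finset ℤ) (hcard : 3 ≤ Ks.card)
    (P : Fin N → PS d) :
    Set.Finite {g : PS d | ∃ p ∈ Omega d K τ,
      IsGhost (K := K) τ (Fin.snoc P p) Ks g} := by
  have hlines : (⋃ k₁ ∈ Ks, ⋃ k₂ ∈ Ks.erase k₁, ⋃ (i₁) (i₂),
      Lset d K τ (P i₁) k₁ ∩ Lset d K τ (P i₂) k₂).Finite :=
    Set.Finite.biUnion Ks.finite_toSet fun k₁ _ =>
      Set.Finite.biUnion (Ks.erase k₁).finite_toSet fun k₂ hk₂ =>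
        Set.finite_iUnion fun i₁ => Set.finite_iUnion fun i₂ =>
          (Lset_inter_subsingleton hτ.ne' _ _ (Finset.ne_of_mem_erase hk₂).symm).finite
  refine hlines.subset ?_
  rintro g ⟨p, -, hg⟩
  obtain ⟨k₁, hk₁, k₂, hk₂, hne, i₁, i₂, hgL⟩ := hg.exists_mem_Lset_inter hcard
  simp only [Set.mem_iUnion]
  exact ⟨k₁, hk₁, k₂, Finset.mem_erase.mpr ⟨hne.symm, hk₂⟩, i₁, i₂, hgL⟩

/-- The set of potential ghost particles of a configuration `T`, namely
`⋃_{P ∈ Ω} G(T ∪ {P})`, is finite. -/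
theorem potential_ghost_particles_finite
    {d K N : ℕ} (hd : 1 ≤ d) (τ : ℝ) (hτ : 0 < τ)
    (Ks : Finset ℤ) (hKs : Ks ⊆ Finset.Icc (-(K : ℤ)) (K : ℤ)) (hcard : 3 ≤ Ks.card)
    (P : Fin N → PS d) (hmem : ∀ i, P i ∈ Omega d K τ) (hdist : Function.Injective P) :
    Set.Finite {g : PS d | ∃ p ∈ Omega d K τ,
      IsGhost (K := K) τ (Fin.snoc P p) Ks g} :=
  potential_ghost_particles_finite_general τ hτ Ks hcard P

end
end

section
/- Let K ≥ 1, set 𝒦 = {−K,…,K} and m = 2K+1. Let {(x_i,v_i)}_{i=1}^m be a configuration of m distinct particles in Ω admitting m pairwise distinct ghost particles {(g_j,w_j)}_{j=1}^m with respect to 𝒦, with the set of ghost particles disjoint from the set of particles. Suppose that for every k ∈ 𝒦 the positions x_i + kτv_i (i = 1,…,m) are pairwise distinct, and for every k ∈ 𝒦 and every i ∈ {1,…,m} there exists exactly one index j ∈ {1,…,m} with g_j − x_i + kτ(w_j − v_i) = 0. Let w_1,…,w_m > 0 and ω = Σ_{i=1}^m w_i δ_{(x_i,v_i)}. Then the dynamical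 recovery problem with data y = 𝒢ω admits infinitely many solutions: there exist infinitely many pairwise distinct finite positive measures λ on Ω with 𝒢λ = 𝒢ω and ‖λ‖_TV = ‖ω‖_TV; in particular, ω is not the unique minimizer of the total variation norm subject to 𝒢λ = y. -/
open MeasureTheory Complex Real Set

noncomputable section

/-
Since the ghosts are matched one-to-one with the particle positions at every time sample
(a matching that is injective because those positions are distinct), the measurements of
`∑ j δ_{G j}` and of `∑ i δ_{P i}` coincide. Hence, for `0 < t ≤ min w`, moving mass `t` from
every particle onto the ghosts gives a positive measure
`λ_t = ∑ i (w i - t) δ_{P i} + t ∑ j δ_{G j}` supported in `Ω`, with the same data and the same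
total mass as `ω`. These measures are pairwise distinct, since `λ_t` gives mass `(2K+1) t` to
the ghosts, which are disjoint from the particles.
-/

open scoped NNReal

namespace MeasureTheory.Measure

variable {α : Type*} [MeasurableSpace α]

def toComplexMeasure (μ : Measure α) [IsFiniteMeasure μ] : ComplexMeasure α :=
  μ.toSignedMeasure.toComplexMeasure 0

section FiniteMeasure

variable (μ : Measure α) [IsFiniteMeasure μ]

theorem toComplexMeasure_apply {s : Set α} (hs : MeasurableSet s) :
    μ.toComplexMeasure s = μ.real s := by
  apply Complex.ext <;> simp [toComplexMeasure, SignedMeasure.toComplexMeasure_apply,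
    toSignedMeasure_apply_measurable hs]

theorem toSignedMeasure_toJordanDecomposition :
    μ.toSignedMeasure.toJordanDecomposition = ⟨μ, 0, .zero_right⟩ := by
  apply JordanDecomposition.toSignedMeasure_injective
  rw [SignedMeasure.toSignedMeasure_toJordanDecomposition]
  exact (sub_zero _).symm.trans (congrArg _ toSignedMeasure_zero.symm)

theorem cintegral_toComplexMeasure (f : α → ℂ) :
    cintegral μ.toComplexMeasure f = ∫ x, f x ∂μ := by
  rw [cintegral, toComplexMeasure, SignedMeasure.re_toComplexMeasure,
    SignedMeasure.im_toComplexMeasure, toSignedMeasure_toJordanDecomposition,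
    SignedMeasure.toJordanDecomposition_zero, JordanDecomposition.zero_posPart,
    JordanDecomposition.zero_negPart]
  simp

theorem tvNorm_toComplexMeasure [TopologicalSpace α] :
    tvNorm μ.toComplexMeasure = μ.real Set.univ := by
  refine IsGreatest.csSup_eq ⟨⟨fun _ => 1, continuous_const, by simp, ?_⟩, ?_⟩
  · simp [cintegral_toComplexMeasure, abs_of_nonneg measureReal_nonneg]
  · rintro _ ⟨f, -, hf, rfl⟩
    rw [cintegral_toComplexMeasure]
    simpa using norm_integral_le_of_norm_le_const (.of_forall hf)

theorem supportedOn_toComplexMeasure {S : Set α} (h : μ Sᶜ = 0) :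
    SupportedOn μ.toComplexMeasure S := by
  intro t ht hdisj
  have hμt : μ t = 0 := measure_mono_null (Set.subset_compl_iff_disjoint_right.2 hdisj) h
  simp [toComplexMeasure_apply μ ht, Measure.real, hμt]

end FiniteMeasure

theorem measureReal_finsetSum_apply {ι : Type*} (s : Finset ι) (μ : ι → Measure α)
    [∀ i, IsFiniteMeasure (μ i)] (t : Set α) :
    (∑ i ∈ s, μ i).real t = ∑ i ∈ s, (μ i).real t := by
  simp [measureReal_def, finsetSum_apply, ENNReal.toReal_sum, measure_ne_top]

theorem cdirac_eq (a : α) : cdirac a = (dirac a).toComplexMeasure := rfl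

theorem sum_smul_cdirac_eq {ι : Type*} [Fintype ι] (p : ι → α) (c : ι → ℝ≥0) :
    ∑ i, ((c i : ℝ) : ℂ) • cdirac (p i) = (∑ i, c i • dirac (p i)).toComplexMeasure := by
  ext s hs
  simp [cdirac_eq, toComplexMeasure_apply _ hs, measureReal_finsetSum_apply]

section Dirac

variable [MeasurableSingletonClass α] {ι : Type*} [Fintype ι] (p : ι → α) (c : ι → ℝ≥0)

theorem integral_sum_smul_dirac {E : Type*} [NormedAddCommGroup E] [NormedSpace ℝ E]
    [CompleteSpace E] (f : α → E) : ∫ x, f x ∂(∑ i, c i • dirac (p i)) = ∑ i, c i • f (p i) := by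
  rw [integral_finsetSum_measure fun i _ =>
    (integrable_dirac enorm_lt_top).smul_measure ENNReal.coe_ne_top]
  simp [integral_smul_nnreal_measure]

theorem measureReal_sum_smul_dirac (s : Set α) :
    (∑ i, c i • dirac (p i)).real s = ∑ i, s.indicator (fun _ => (c i : ℝ)) (p i) := by
  rw [measureReal_finsetSum_apply]
  congr! 1 with i
  by_cases h : p i ∈ s <;> simp [h, measureReal_def, dirac_apply]

theorem sum_smul_dirac_compl {S : Set α} (h : ∀ i, p i ∈ S) :
    (∑ i, c i • dirac (p i)) Sᶜ = 0 := by
  simp [finsetSum_apply, dirac_apply, h]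

end Dirac

end MeasureTheory.Measure

section Transfer

variable {α : Type*} [MeasurableSpace α] {ι : Type*} [Fintype ι]

def ghostTransfer (P G : ι → α) (w : ι → ℝ≥0) (t : ℝ≥0) : Measure α :=
  ∑ x, Sum.elim (fun i => w i - t) (fun _ => t) x • Measure.dirac (Sum.elim P G x)

instance (P G : ι → α) (w : ι → ℝ≥0) (t : ℝ≥0) : IsFiniteMeasure (ghostTransfer P G w t) := by
  unfold ghostTransfer; infer_instance

variable [MeasurableSingletonClass α] {P G : ι → α} {w : ι → ℝ≥0} {t : ℝ≥0}

theorem integral_ghostTransfer {E : Type*} [NormedAddCommGroup E] [NormedSpace ℝ E]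
    [CompleteSpace E] (ht : ∀ i, t ≤ w i) {f : α → E} (hf : ∑ j, f (G j) = ∑ i, f (P i)) :
    ∫ x, f x ∂ghostTransfer P G w t = ∑ i, w i • f (P i) := by
  rw [ghostTransfer, Measure.integral_sum_smul_dirac, Fintype.sum_sum_type]
  simp only [Sum.elim_inl, Sum.elim_inr, ← Finset.smul_sum, hf]
  simp only [Finset.smul_sum, ← Finset.sum_add_distrib, ← add_smul, tsub_add_cancel_of_le (ht _)]

theorem measureReal_univ_ghostTransfer (ht : ∀ i, t ≤ w i) :
    (ghostTransfer P G w t).real Set.univ = ∑ i, (w i : ℝ) := by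
  simpa [NNReal.smul_def] using integral_ghostTransfer (f := fun _ => (1 : ℝ)) ht rfl

theorem measureReal_range_ghostTransfer (hdisj : Disjoint (Set.range P) (Set.range G)) :
    (ghostTransfer P G w t).real (Set.range G) = Fintype.card ι * t := by
  have hP : ∀ i, P i ∉ Set.range G := fun i => hdisj.notMem_of_mem_left (Set.mem_range_self i)
  rw [ghostTransfer, Measure.measureReal_sum_smul_dirac, Fintype.sum_sum_type]
  simp [hP]

theorem injective_toComplexMeasure_ghostTransfer [Nonempty ι]
    (hdisj : Disjoint (Set.range P) (Set.range G)) :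
    Function.Injective fun t => (ghostTransfer P G w t).toComplexMeasure := fun t t' h => by
  have h' := congrArg (fun μ : ComplexMeasure α => μ (Set.range G)) h
  simp only [Measure.toComplexMeasure_apply _ (Set.finite_range G).measurableSet,
    measureReal_range_ghostTransfer hdisj, Complex.ofReal_inj] at h'
  exact NNReal.coe_injective (mul_left_cancel₀ (by simp) h')

theorem ghostTransfer_compl {S : Set α} (hP : ∀ i, P i ∈ S) (hG : ∀ j, G j ∈ S) :
    ghostTransfer P G w t Sᶜ = 0 :=
  Measure.sum_smul_dirac_compl _ _ fun x => x.rec hP hG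

end Transfer

section Ghosts

variable {d : ℕ} (τ : ℝ) {ι : Type*} [Fintype ι] {P G : ι → PS d}

def position (k : ℤ) (p : PS d) : Fin d → ℝ := fun j => p.1 j + (k : ℝ) * τ * p.2 j

theorem position_eq_position_iff {k : ℤ} {p q : PS d} :
    position τ k p = position τ k q ↔ ∀ j, p.1 j - q.1 j + (k : ℝ) * τ * (p.2 j - q.2 j) = 0 := by
  simp only [position, funext_iff]
  exact forall_congr' fun j => by constructor <;> intro h <;> linear_combination h

theorem testFn_congr_position {l : Fin d → ℤ} {k : ℤ} {p q : PS d}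
    (h : position τ k p = position τ k q) : testFn d τ l k p = testFn d τ l k q := by
  have hj : ∀ j, (p.1 j : ℂ) + k * τ * p.2 j = q.1 j + k * τ * q.2 j := fun j => by
    exact_mod_cast congrFun h j
  simp only [testFn, hj]

theorem sum_testFn_eq_of_matching {k : ℤ}
    (hpos : ∀ i i', i ≠ i' → position τ k (P i) ≠ position τ k (P i'))
    (hmatch : ∀ i, ∃ j, position τ k (G j) = position τ k (P i)) (l : Fin d → ℤ) :
    ∑ j, testFn d τ l k (G j) = ∑ i, testFn d τ l k (P i) := by
  choose σ hσ using hmatch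
  have hσinj : Function.Injective σ := fun i i' h => by
    by_contra hne
    exact hpos i i' hne (by rw [← hσ i, ← hσ i', h])
  exact (Fintype.sum_bijective σ hσinj.bijective_of_finite (fun i => testFn d τ l k (P i))
    (fun j => testFn d τ l k (G j)) fun i => (testFn_congr_position τ (hσ i)).symm).symm

theorem sameMeas_ghostTransfer {K f_c : ℕ} {w : ι → ℝ≥0} {t : ℝ≥0} (ht : ∀ i, t ≤ w i)
    (hpos : ∀ k ∈ Finset.Icc (-(K : ℤ)) K, ∀ i i', i ≠ i' →
      position τ k (P i) ≠ position τ k (P i'))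
    (hmatch : ∀ k ∈ Finset.Icc (-(K : ℤ)) K, ∀ i, ∃ j, position τ k (G j) = position τ k (P i)) :
    SameMeas K τ f_c (ghostTransfer P G w t).toComplexMeasure
      (∑ i, w i • Measure.dirac (P i)).toComplexMeasure := by
  intro l _ k hk
  have hk' : k ∈ Finset.Icc (-(K : ℤ)) K := Finset.mem_Icc.2 (abs_le.1 hk)
  simp only [Gmeas, Measure.cintegral_toComplexMeasure, Measure.integral_sum_smul_dirac]
  exact integral_ghostTransfer ht (sum_testFn_eq_of_matching τ (hpos k hk') (hmatch k hk') l)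

def IsPositiveSolution (K : ℕ) (f_c : ℕ) (ω lam : ComplexMeasure (PS d)) : Prop :=
  SupportedOn lam (Omega d K τ) ∧
    (∀ s : Set (PS d), MeasurableSet s → (lam s).im = 0 ∧ 0 ≤ (lam s).re) ∧
    SameMeas K τ f_c lam ω ∧ tvNorm lam = tvNorm ω

theorem isPositiveSolution_ghostTransfer {K f_c : ℕ} {w : ι → ℝ≥0} {t : ℝ≥0} (ht : ∀ i, t ≤ w i)
    (hPmem : ∀ i, P i ∈ Omega d K τ) (hGmem : ∀ j, G j ∈ Omega d K τ)
    (hpos : ∀ k ∈ Finset.Icc (-(K : ℤ)) K, ∀ i i', i ≠ i' →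
      position τ k (P i) ≠ position τ k (P i'))
    (hmatch : ∀ k ∈ Finset.Icc (-(K : ℤ)) K, ∀ i, ∃ j, position τ k (G j) = position τ k (P i)) :
    IsPositiveSolution τ K f_c (∑ i, w i • Measure.dirac (P i)).toComplexMeasure
      (ghostTransfer P G w t).toComplexMeasure := by
  refine ⟨Measure.supportedOn_toComplexMeasure _ (ghostTransfer_compl hPmem hGmem),
    fun s hs => by simp [Measure.toComplexMeasure_apply _ hs],
    sameMeas_ghostTransfer τ ht hpos hmatch, ?_⟩
  rw [Measure.tvNorm_toComplexMeasure, Measure.tvNorm_toComplexMeasure,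
    measureReal_univ_ghostTransfer ht, Measure.measureReal_sum_smul_dirac]
  simp

end Ghosts

theorem infinitely_many_solutions_of_ghosts_general
    {d K : ℕ} (τ : ℝ) (f_c : ℕ)
    (P G : Fin (2 * K + 1) → PS d)
    (hPmem : ∀ i, P i ∈ Omega d K τ)
    (hGmem : ∀ j, G j ∈ Omega d K τ)
    (hdisj : Disjoint (Set.range P) (Set.range G))
    (hpos : ∀ k ∈ Finset.Icc (-(K : ℤ)) (K : ℤ), ∀ i i' : Fin (2 * K + 1), i ≠ i' →
      (fun j => (P i).1 j + (k : ℝ) * τ * (P i).2 j) ≠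
        (fun j => (P i').1 j + (k : ℝ) * τ * (P i').2 j))
    (huniq : ∀ k ∈ Finset.Icc (-(K : ℤ)) (K : ℤ), ∀ i : Fin (2 * K + 1),
      ∃! j' : Fin (2 * K + 1), ∀ j,
        (G j').1 j - (P i).1 j + (k : ℝ) * τ * ((G j').2 j - (P i).2 j) = 0)
    (w : Fin (2 * K + 1) → ℝ) (hw : ∀ i, 0 < w i) :
    Set.Infinite {lam : ComplexMeasure (PS d) |
        SupportedOn lam (Omega d K τ) ∧
        (∀ s : Set (PS d), MeasurableSet s → (lam s).im = 0 ∧ 0 ≤ (lam s).re) ∧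
        SameMeas K τ f_c lam (∑ i, ((w i : ℂ)) • cdirac (P i)) ∧
        tvNorm lam = tvNorm (∑ i, ((w i : ℂ)) • cdirac (P i))} ∧
      ∃ lam : ComplexMeasure (PS d),
        lam ≠ (∑ i, ((w i : ℂ)) • cdirac (P i)) ∧
        SupportedOn lam (Omega d K τ) ∧
        SameMeas K τ f_c lam (∑ i, ((w i : ℂ)) • cdirac (P i)) ∧
        tvNorm lam ≤ tvNorm (∑ i, ((w i : ℂ)) • cdirac (P i)) := by
  set w' : Fin (2 * K + 1) → ℝ≥0 := fun i => ⟨w i, (hw i).le⟩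
  rw [show ∑ i, ((w i : ℂ)) • cdirac (P i) = (∑ i, w' i • Measure.dirac (P i)).toComplexMeasure
    from Measure.sum_smul_cdirac_eq P w']
  set ε := Finset.univ.inf' Finset.univ_nonempty w'
  have hε : 0 < ε := (Finset.lt_inf'_iff _).2 fun i _ => hw i
  have hmatch : ∀ k ∈ Finset.Icc (-(K : ℤ)) K, ∀ i, ∃ j, position τ k (G j) = position τ k (P i) :=
    fun k hk i => (huniq k hk i).exists.imp fun _ h => (position_eq_position_iff τ).2 h
  have hsol : Set.MapsTo (fun t => (ghostTransfer P G w' t).toComplexMeasure) (Set.Ioc 0 ε)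
      {lam | IsPositiveSolution τ K f_c (∑ i, w' i • Measure.dirac (P i)).toComplexMeasure lam} :=
    fun t ht => isPositiveSolution_ghostTransfer τ
      (fun i => ht.2.trans (Finset.inf'_le _ (Finset.mem_univ i))) hPmem hGmem hpos hmatch
  have hinf := Set.infinite_of_injOn_mapsTo
    (injective_toComplexMeasure_ghostTransfer hdisj).injOn hsol (Set.Ioc_infinite hε)
  obtain ⟨lam, hlam, hne⟩ := hinf.exists_notMem_finite (Set.finite_singleton _)
  exact ⟨hinf, lam, hne, hlam.1, hlam.2.2.1, hlam.2.2.2.le⟩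

/-- If a configuration of `m = 2K+1` particles admits `m` ghost particles
matched one-to-one with the particle positions at every time sample, then the dynamical
recovery problem admits infinitely many solutions; in particular `ω` is not the unique
total-variation minimizer. -/
theorem infinitely_many_solutions_of_ghosts
    {d K : ℕ} (hd : 1 ≤ d) (hK : 1 ≤ K) (τ : ℝ) (hτ : 0 < τ) (f_c : ℕ)
    (P G : Fin (2 * K + 1) → PS d)
    (hPmem : ∀ i, P i ∈ Omega d K τ) (hPdist : Function.Injective P)
    (hGmem : ∀ j, G j ∈ Omega d K τ) (hGdist : Function.Injective G)
    (hghost : ∀ j, IsGhost (K := K) τ P (Finset.Icc (-(K : ℤ)) (K : ℤ)) (G j))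
    (hdisj : Disjoint (Set.range P) (Set.range G))
    (hpos : ∀ k ∈ Finset.Icc (-(K : ℤ)) (K : ℤ), ∀ i i' : Fin (2 * K + 1), i ≠ i' →
      (fun j => (P i).1 j + (k : ℝ) * τ * (P i).2 j) ≠
        (fun j => (P i').1 j + (k : ℝ) * τ * (P i').2 j))
    (huniq : ∀ k ∈ Finset.Icc (-(K : ℤ)) (K : ℤ), ∀ i : Fin (2 * K + 1),
      ∃! j' : Fin (2 * K + 1), ∀ j,
        (G j').1 j - (P i).1 j + (k : ℝ) * τ * ((G j').2 j - (P i).2 j) = 0)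
    (w : Fin (2 * K + 1) → ℝ) (hw : ∀ i, 0 < w i) :
    Set.Infinite {lam : ComplexMeasure (PS d) |
        SupportedOn lam (Omega d K τ) ∧
        (∀ s : Set (PS d), MeasurableSet s → (lam s).im = 0 ∧ 0 ≤ (lam s).re) ∧
        SameMeas K τ f_c lam (∑ i, ((w i : ℂ)) • cdirac (P i)) ∧
        tvNorm lam = tvNorm (∑ i, ((w i : ℂ)) • cdirac (P i))} ∧
      ∃ lam : ComplexMeasure (PS d),
        lam ≠ (∑ i, ((w i : ℂ)) • cdirac (P i)) ∧
        SupportedOn lam (Omega d K τ) ∧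
        SameMeas K τ f_c lam (∑ i, ((w i : ℂ)) • cdirac (P i)) ∧
        tvNorm lam ≤ tvNorm (∑ i, ((w i : ℂ)) • cdirac (P i)) :=
  infinitely_many_solutions_of_ghosts_general τ f_c P G hPmem hGmem hdisj hpos huniq w hw

end
end

section
/- Let 𝒦 ⊆ {−K,…,K} with m = |𝒦| ≥ 3. Let {(x_i,v_i)}_{i=1}^m be a configuration of m distinct particles in Ω admitting m pairwise distinct ghost particles {(g_j,w_j)}_{j=1}^m with respect to 𝒦, and suppose that for every k ∈ 𝒦 and every i ∈ {1,…,m} the set L_{i,k} contains exactly one of the ghost particles (g_j,w_j). Then the two sets {(x_i,v_i) : i = 1,…,m} and {(g_j,w_j) : j = 1,…,m} do not coincide; equivalently, the signed measure h = Σ_{i=1}^m δ_{(x_i,v_i)} − Σ_{j=1}^m δ_{(g_j,w_j)} is nonzero. -/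
open MeasureTheory Complex Real Set

noncomputable section

/-! If the particles and the ghosts formed the same set, take any ghost `g` and the particles
`P (σ k)`, `k ∈ 𝒦`, whose sets `L_{σ k, k}` meet exactly in `g`. Each `P (σ k)` is then itself a
ghost lying in its own `L_{σ k, k}`, so uniqueness forces `P (σ k) = g` for every `k`, and two
distinct time samples produce the same particle, contradicting injectivity of `σ`.
A finite sum of Dirac masses determines the set of its atoms (its mass at `{x}` counts the
indices sitting at `x`), so the measure statement reduces to the set statement. -/

section DiracSums

variable {α ι κ : Type*} [MeasurableSpace α]

open scoped Classical in
theorem cdirac_apply (a : α) {s : Set α} (hs : MeasurableSet s) :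
    cdirac a s = if a ∈ s then 1 else 0 := by
  by_cases ha : a ∈ s <;>
    simp [cdirac, SignedMeasure.toComplexMeasure_apply, Complex.ext_iff,
      Measure.toSignedMeasure_apply_measurable hs, measureReal_def, Measure.dirac_apply' a hs, ha]

variable [MeasurableSingletonClass α] [Fintype ι] [Fintype κ]

open scoped Classical in
theorem sum_cdirac_apply_singleton (f : ι → α) (x : α) :
    (∑ i, cdirac (f i)) {x} = ((Finset.univ.filter fun i => f i = x).card : ℂ) := by
  simp [cdirac_apply _ (measurableSet_singleton x), Finset.sum_boole]

theorem mem_range_iff_sum_cdirac_apply_singleton_ne_zero {f : ι → α} {x : α} :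
    x ∈ range f ↔ (∑ i, cdirac (f i)) {x} ≠ 0 := by
  classical
  rw [sum_cdirac_apply_singleton, Nat.cast_ne_zero, ← Nat.pos_iff_ne_zero, Finset.card_pos,
    Finset.filter_nonempty_iff]
  simp

theorem range_eq_of_sum_cdirac_eq {f : ι → α} {g : κ → α}
    (h : ∑ i, cdirac (f i) = ∑ j, cdirac (g j)) : range f = range g := by
  ext x
  rw [mem_range_iff_sum_cdirac_apply_singleton_ne_zero,
    mem_range_iff_sum_cdirac_apply_singleton_ne_zero, h]

end DiracSums

section Ghosts

variable {d K N : ℕ} {τ : ℝ} {ι : Type*}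

theorem mem_Lset_self {p : PS d} (hp : p ∈ Omega d K τ) (k : ℤ) : p ∈ Lset d K τ p k :=
  ⟨hp, fun j => by ring⟩

theorem IsGhost.exists_mem_Lset {P : Fin N → PS d} {Ks : Finset ℤ} {g : PS d}
    (hg : IsGhost (K := K) τ P Ks g) :
    ∃ σ : ℤ → Fin N, InjOn σ Ks ∧ ∀ k ∈ Ks, g ∈ Lset d K τ (P (σ k)) k := by
  obtain ⟨-, σ, hσ, hinter⟩ := hg
  refine ⟨σ, hσ, fun k hk => ?_⟩
  have hgmem : g ∈ ⋂ k ∈ Ks, Lset d K τ (P (σ k)) k := hinter ▸ mem_singleton g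
  exact mem_iInter₂.1 hgmem k hk

theorem eq_of_existsUnique_mem_Lset {G : ι → PS d} {p : PS d} {k : ℤ} {j : ι}
    (huniq : ∃! j, G j ∈ Lset d K τ p k) (hp : p ∈ Omega d K τ) (hpG : p ∈ range G)
    (hj : G j ∈ Lset d K τ p k) : p = G j := by
  obtain ⟨j', rfl⟩ := hpG
  rw [huniq.unique (mem_Lset_self hp k) hj]

theorem card_le_one_of_range_subset {Ks : Finset ℤ} {P : Fin N → PS d} {G : ι → PS d}
    (hPmem : ∀ i, P i ∈ Omega d K τ) (hPinj : Function.Injective P) {j₀ : ι}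
    (hghost : IsGhost (K := K) τ P Ks (G j₀))
    (huniq : ∀ k ∈ Ks, ∀ i, ∃! j, G j ∈ Lset d K τ (P i) k) (hsub : range P ⊆ range G) :
    Ks.card ≤ 1 := by
  obtain ⟨σ, hσ, hmem⟩ := hghost.exists_mem_Lset
  have hcollapse : ∀ k ∈ Ks, P (σ k) = G j₀ := fun k hk =>
    eq_of_existsUnique_mem_Lset (huniq k hk _) (hPmem _) (hsub (mem_range_self _)) (hmem k hk)
  exact Finset.card_le_one.2 fun a ha b hb =>
    hσ ha hb (hPinj ((hcollapse a ha).trans (hcollapse b hb).symm))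

end Ghosts

theorem ghost_difference_nonzero_general
    {d K : ℕ} (τ : ℝ)
    (Ks : Finset ℤ) (hcard : 3 ≤ Ks.card)
    (P G : Fin Ks.card → PS d)
    (hPmem : ∀ i, P i ∈ Omega d K τ) (hPdist : Function.Injective P)
    (hghost : ∀ j, IsGhost (K := K) τ P Ks (G j))
    (huniq : ∀ k ∈ Ks, ∀ i : Fin Ks.card, ∃! j : Fin Ks.card, G j ∈ Lset d K τ (P i) k) :
    Set.range P ≠ Set.range G ∧
      (∑ i, cdirac (P i)) - (∑ j, cdirac (G j)) ≠ (0 : ComplexMeasure (PS d)) := by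
  have hrange : range P ≠ range G := fun h => by
    have := card_le_one_of_range_subset hPmem hPdist (hghost ⟨0, by omega⟩) huniq h.subset
    omega
  exact ⟨hrange, fun h0 => hrange (range_eq_of_sum_cdirac_eq (sub_eq_zero.1 h0))⟩

/-- If each `L_{i,k}` contains exactly one of the `m` ghost particles of
an `m`-particle configuration (`m = |𝒦| ≥ 3`), then the set of particles and the set of
ghost particles do not coincide; equivalently `h = ∑ δ_{(x_i,v_i)} − ∑ δ_{(g_j,w_j)} ≠ 0`. -/
theorem ghost_difference_nonzero
    {d K : ℕ} (hd : 1 ≤ d) (τ : ℝ) (hτ : 0 < τ)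
    (Ks : Finset ℤ) (hKs : Ks ⊆ Finset.Icc (-(K : ℤ)) (K : ℤ)) (hcard : 3 ≤ Ks.card)
    (P G : Fin Ks.card → PS d)
    (hPmem : ∀ i, P i ∈ Omega d K τ) (hPdist : Function.Injective P)
    (hGmem : ∀ j, G j ∈ Omega d K τ) (hGdist : Function.Injective G)
    (hghost : ∀ j, IsGhost (K := K) τ P Ks (G j))
    (huniq : ∀ k ∈ Ks, ∀ i : Fin Ks.card, ∃! j : Fin Ks.card, G j ∈ Lset d K τ (P i) k) :
    Set.range P ≠ Set.range G ∧
      (∑ i, cdirac (P i)) - (∑ j, cdirac (G j)) ≠ (0 : ComplexMeasure (PS d)) :=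
  ghost_difference_nonzero_general τ Ks hcard P G hPmem hPdist hghost huniq

end
end

section
/- Let C₁ = 0.3353 and C₂ = 0.1649, and let d = 1, K ≥ 1, τ > 0, f_c ≥ 1. Fix (x₀, v₀) ∈ ℝ², and suppose that for every integer k with −K ≤ k ≤ K a function q̃_k : ℝ → ℂ satisfies |q̃_k(t)| ≤ 1 − C₁ f_c² (t − (x₀ + kτv₀))² for every t with |t − (x₀ + kτv₀)| ≤ C₂/f_c. Let Δ_x, Δ_v > 0 with Δ_x² ≤ (K(K+1)/3) τ² Δ_v², and let (n_x, n_v) be a pair of integers with (n_x, n_v) ≠ (0,0). Set (x, v) = (x₀ + n_x Δ_x, v₀ + n_v Δ_v) and assume |x − x₀| + Kτ|v − v₀| < C₂/f_c. Then |(1/(2K+1)) Σ_{k=−K}^{K} q̃_k(x + kτv)| ≤ 1 − C₁ f_c² Δ_x². -/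
open Real

lemma icc_insert (m : ℕ) :
    Finset.Icc (-((m:ℤ)+1)) ((m:ℤ)+1) =
      insert (-((m:ℤ)+1)) (insert ((m:ℤ)+1) (Finset.Icc (-(m:ℤ)) (m:ℤ))) := by
  ext k; simp only [Finset.mem_insert, Finset.mem_Icc]; omega

lemma sum_icc_id (K : ℕ) : ∑ k ∈ Finset.Icc (-(K:ℤ)) (K:ℤ), (k:ℝ) = 0 := by
  induction K with
  | zero => simp
  | succ m ih =>
    have h : ((m+1:ℕ):ℤ) = (m:ℤ)+1 := by push_cast; ring
    rw [h, icc_insert m, Finset.sum_insert (by simp only [Finset.mem_insert, Finset.mem_Icc]; omega),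
      Finset.sum_insert (by simp only [Finset.mem_Icc]; omega), ih]
    push_cast
    ring

lemma sum_icc_sq (K : ℕ) : ∑ k ∈ Finset.Icc (-(K:ℤ)) (K:ℤ), (k:ℝ)^2
    = (K:ℝ) * ((K:ℝ)+1) * (2*(K:ℝ)+1) / 3 := by
  induction K with
  | zero => simp
  | succ m ih =>
    have h : ((m+1:ℕ):ℤ) = (m:ℤ)+1 := by push_cast; ring
    rw [h, icc_insert m, Finset.sum_insert (by simp only [Finset.mem_insert, Finset.mem_Icc]; omega),
      Finset.sum_insert (by simp only [Finset.mem_Icc]; omega), ih]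
    push_cast
    ring

lemma card_icc (K : ℕ) : (Finset.Icc (-(K:ℤ)) (K:ℤ)).card = 2*K+1 := by
  rw [Int.card_Icc]; omega

set_option maxHeartbeats 1000000 in
/-- Near a particle on the grid, the averaged certificate is bounded by
`1 − C₁ f_c² Δ_x²`, where `C₁ = 0.3353` and `C₂ = 0.1649`. -/
theorem averaged_certificate_bound_near_particle
    (K : ℕ) (hK : 1 ≤ K) (τ : ℝ) (hτ : 0 < τ) (f_c : ℕ) (hfc : 1 ≤ f_c)
    (x₀ v₀ : ℝ) (qt : ℤ → ℝ → ℂ)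
    (hq : ∀ k : ℤ, |k| ≤ (K : ℤ) → ∀ t : ℝ, |t - (x₀ + (k : ℝ) * τ * v₀)| ≤ 0.1649 / (f_c : ℝ) →
      ‖qt k t‖ ≤ 1 - 0.3353 * (f_c : ℝ) ^ 2 * (t - (x₀ + (k : ℝ) * τ * v₀)) ^ 2)
    (Δx Δv : ℝ) (hΔx : 0 < Δx) (hΔv : 0 < Δv)
    (hrel : Δx ^ 2 ≤ ((K : ℝ) * (K + 1) / 3) * τ ^ 2 * Δv ^ 2)
    (n : ℤ × ℤ) (hn : n ≠ 0) (x v : ℝ)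
    (hx : x = x₀ + (n.1 : ℝ) * Δx) (hv : v = v₀ + (n.2 : ℝ) * Δv)
    (hclose : |x - x₀| + (K : ℝ) * τ * |v - v₀| < 0.1649 / (f_c : ℝ)) :
    ‖(1 / (2 * (K : ℂ) + 1)) * ∑ k ∈ Finset.Icc (-(K : ℤ)) (K : ℤ),
        qt k (x + (k : ℝ) * τ * v)‖ ≤ 1 - 0.3353 * (f_c : ℝ) ^ 2 * Δx ^ 2 := by
  obtain ⟨a, ha⟩ : ∃ a : ℝ, a = (n.1 : ℝ) * Δx := ⟨_, rfl⟩
  obtain ⟨b, hb⟩ : ∃ b : ℝ, b = (n.2 : ℝ) * Δv := ⟨_, rfl⟩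
  have hxa : x - x₀ = a := by rw [hx, ha]; ring
  have hvb : v - v₀ = b := by rw [hv, hb]; ring
  have hfpos : (0:ℝ) < (f_c:ℝ) := by exact_mod_cast Nat.pos_of_ne_zero (by omega)
  have hKpos : (0:ℝ) < (K:ℝ) := by exact_mod_cast hK
  have hC : (0:ℝ) ≤ 0.3353 * (f_c:ℝ)^2 := by positivity
  -- pointwise bound
  have hpt : ∀ k ∈ Finset.Icc (-(K:ℤ)) (K:ℤ),
      ‖qt k (x + (k:ℝ) * τ * v)‖ ≤ 1 - 0.3353 * (f_c:ℝ)^2 * (a + (k:ℝ) * τ * b)^2 := by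
    intro k hk
    rw [Finset.mem_Icc] at hk
    have hkabs : |k| ≤ (K:ℤ) := abs_le.mpr hk
    have hkR : |(k:ℝ)| ≤ (K:ℝ) := by
      rw [← Int.cast_abs]; exact_mod_cast hkabs
    have hdiff : x + (k:ℝ) * τ * v - (x₀ + (k:ℝ) * τ * v₀) = a + (k:ℝ) * τ * b := by
      rw [hx, hv, ha, hb]; ring
    have hle : |a + (k:ℝ) * τ * b| ≤ 0.1649 / (f_c:ℝ) := by
      have hkb : |(k:ℝ) * τ * b| = |(k:ℝ)| * τ * |b| := by
        rw [abs_mul, abs_mul, abs_of_pos hτ]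
      have h1 : |a + (k:ℝ) * τ * b| ≤ |a| + |(k:ℝ)| * τ * |b| := by
        calc |a + (k:ℝ) * τ * b| ≤ |a| + |(k:ℝ) * τ * b| := abs_add_le _ _
          _ = |a| + |(k:ℝ)| * τ * |b| := by rw [hkb]
      have h2 : |(k:ℝ)| * τ * |b| ≤ (K:ℝ) * τ * |b| :=
        mul_le_mul_of_nonneg_right (mul_le_mul_of_nonneg_right hkR hτ.le) (abs_nonneg b)
      rw [hxa, hvb] at hclose
      linarith
    have := hq k hkabs (x + (k:ℝ) * τ * v) (by rw [hdiff]; exact hle)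
    rwa [hdiff] at this
  -- sum bound
  have hsum : ‖∑ k ∈ Finset.Icc (-(K:ℤ)) (K:ℤ), qt k (x + (k:ℝ) * τ * v)‖
      ≤ ∑ k ∈ Finset.Icc (-(K:ℤ)) (K:ℤ), (1 - 0.3353 * (f_c:ℝ)^2 * (a + (k:ℝ) * τ * b)^2) :=
    (norm_sum_le _ _).trans (Finset.sum_le_sum hpt)
  -- compute the sum of bounds
  have hsq : ∑ k ∈ Finset.Icc (-(K:ℤ)) (K:ℤ), (a + (k:ℝ) * τ * b)^2
      = (2*(K:ℝ)+1) * (a^2 + (K:ℝ) * ((K:ℝ)+1) / 3 * τ^2 * b^2) := by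
    have e : ∀ k : ℤ, (a + (k:ℝ) * τ * b)^2
        = a^2 + (2*a*τ*b) * (k:ℝ) + (τ^2*b^2) * (k:ℝ)^2 := by intro k; ring
    simp only [e]
    rw [Finset.sum_add_distrib, Finset.sum_add_distrib, ← Finset.mul_sum, ← Finset.mul_sum,
      sum_icc_id, sum_icc_sq, Finset.sum_const, card_icc]
    push_cast
    ring
  have hcard : ∑ k ∈ Finset.Icc (-(K:ℤ)) (K:ℤ), (1:ℝ) = 2*(K:ℝ)+1 := by
    rw [Finset.sum_const, card_icc]; push_cast; ring
  have hsum2 : ∑ k ∈ Finset.Icc (-(K:ℤ)) (K:ℤ),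
      (1 - 0.3353 * (f_c:ℝ)^2 * (a + (k:ℝ) * τ * b)^2)
      = (2*(K:ℝ)+1) * (1 - 0.3353 * (f_c:ℝ)^2 * (a^2 + (K:ℝ) * ((K:ℝ)+1) / 3 * τ^2 * b^2)) := by
    rw [Finset.sum_sub_distrib, ← Finset.mul_sum, hsq, hcard]; ring
  -- norm of the scalar
  have hNpos : (0:ℝ) < 2*(K:ℝ)+1 := by linarith
  have hnorm : ‖(1 / (2 * (K : ℂ) + 1))‖ = 1 / (2*(K:ℝ)+1) := by
    have h : (2 * (K:ℂ) + 1) = ((2*(K:ℝ)+1 : ℝ) : ℂ) := by push_cast; ring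
    rw [h, norm_div, norm_one, Complex.norm_real, Real.norm_eq_abs, abs_of_pos hNpos]
  -- key: the parenthesized quantity is ≥ Δx^2
  have hnn : (0:ℝ) ≤ (K:ℝ) * ((K:ℝ)+1) / 3 * τ^2 := by positivity
  have hkey : Δx^2 ≤ a^2 + (K:ℝ) * ((K:ℝ)+1) / 3 * τ^2 * b^2 := by
    rcases eq_or_ne n.1 0 with h1 | h1
    · have h2 : n.2 ≠ 0 := fun h2 => hn (Prod.ext h1 h2)
      have h2' : (1:ℝ) ≤ (n.2:ℝ)^2 := by
        have : (1:ℤ) ≤ n.2^2 := by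
          rcases lt_or_gt_of_ne h2 with h | h <;> nlinarith
        exact_mod_cast this
      have hb2 : Δv^2 ≤ b^2 := by
        rw [hb, mul_pow]; nlinarith [sq_nonneg Δv]
      have hmono := mul_le_mul_of_nonneg_left hb2 hnn
      nlinarith [sq_nonneg a]
    · have h1' : (1:ℝ) ≤ (n.1:ℝ)^2 := by
        have : (1:ℤ) ≤ n.1^2 := by
          rcases lt_or_gt_of_ne h1 with h | h <;> nlinarith
        exact_mod_cast this
      have ha2 : Δx^2 ≤ a^2 := by rw [ha, mul_pow]; nlinarith [sq_nonneg Δx]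
      have hb0 : (0:ℝ) ≤ (K:ℝ) * ((K:ℝ)+1) / 3 * τ^2 * b^2 :=
        mul_nonneg hnn (sq_nonneg b)
      linarith
  -- conclude
  rw [norm_mul, hnorm]
  have hbound : ‖∑ k ∈ Finset.Icc (-(K:ℤ)) (K:ℤ), qt k (x + (k:ℝ) * τ * v)‖
      ≤ (2*(K:ℝ)+1) * (1 - 0.3353 * (f_c:ℝ)^2 * (a^2 + (K:ℝ) * ((K:ℝ)+1) / 3 * τ^2 * b^2)) := by
    rw [← hsum2]; exact hsum
  have hmul := mul_le_mul_of_nonneg_left hbound (by positivity : (0:ℝ) ≤ 1 / (2*(K:ℝ)+1))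
  have heq : 1 / (2*(K:ℝ)+1) * ((2*(K:ℝ)+1) * (1 - 0.3353 * (f_c:ℝ)^2 * (a^2 + (K:ℝ) * ((K:ℝ)+1) / 3 * τ^2 * b^2)))
      = 1 - 0.3353 * (f_c:ℝ)^2 * (a^2 + (K:ℝ) * ((K:ℝ)+1) / 3 * τ^2 * b^2) := by
    field_simp
  rw [heq] at hmul
  have hfin := mul_le_mul_of_nonneg_left hkey hC
  linarith
end

section
/- Let C₁ = 0.3353 and C₂ = 0.1649, and let d = 1, K ≥ 1, τ > 0, f_c ≥ 1, Δ_x > 0. Let {(x_i,v_i)}_{i=1}^N ⊆ ℝ² be a configuration of particles, and suppose that for every integer k with −K ≤ k ≤ K a function q̃_k : ℝ → ℂ satisfies: (a) for every i and every t with |t − (x_i + kτv_i)| ≤ C₂/f_c, |q̃_k(t)| ≤ 1 − C₁ f_c² (t − (x_i + kτv_i))²; and (b) for every t with min_{1≤i≤N} |t − (x_i + kτv_i)| > C₂/f_c, |q̃_k(t)| ≤ 1 − C₁ C₂². If (x,v) ∈ ℝ² satisfies the stability condition (1/(2K+1)) Σ_{k=−K}^{K} min{ min_{1≤i≤N} |x_i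 − x + kτ(v_i − v)|², C₂²/f_c² } ≥ Δ_x², then |(1/(2K+1)) Σ_{k=−K}^{K} q̃_k(x + kτv)| ≤ 1 − C₁ f_c² Δ_x². -/
open Real

/-- Away from the particles, the stability condition implies that the
averaged certificate is bounded by `1 − C₁ f_c² Δ_x²`, with `C₁ = 0.3353`, `C₂ = 0.1649`. -/
theorem averaged_certificate_bound_from_stability_condition
    (K : ℕ) (hK : 1 ≤ K) (τ : ℝ) (hτ : 0 < τ) (f_c : ℕ) (hfc : 1 ≤ f_c)
    (Δx : ℝ) (hΔx : 0 < Δx) (N : ℕ) (hN : 0 < N) (x v : Fin N → ℝ)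
    (qt : ℤ → ℝ → ℂ)
    (ha : ∀ k : ℤ, |k| ≤ (K : ℤ) → ∀ i : Fin N, ∀ t : ℝ,
      |t - (x i + (k : ℝ) * τ * v i)| ≤ 0.1649 / (f_c : ℝ) →
      ‖qt k t‖ ≤ 1 - 0.3353 * (f_c : ℝ) ^ 2 * (t - (x i + (k : ℝ) * τ * v i)) ^ 2)
    (hb : ∀ k : ℤ, |k| ≤ (K : ℤ) → ∀ t : ℝ,
      (∀ i : Fin N, 0.1649 / (f_c : ℝ) < |t - (x i + (k : ℝ) * τ * v i)|) →
      ‖qt k t‖ ≤ 1 - 0.3353 * 0.1649 ^ 2)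
    (p : ℝ × ℝ)
    (hstab : Δx ^ 2 ≤ (1 / (2 * (K : ℝ) + 1)) * ∑ k ∈ Finset.Icc (-(K : ℤ)) (K : ℤ),
      min (⨅ i : Fin N, (x i - p.1 + (k : ℝ) * τ * (v i - p.2)) ^ 2)
        (0.1649 ^ 2 / (f_c : ℝ) ^ 2)) :
    ‖(1 / (2 * (K : ℂ) + 1)) * ∑ k ∈ Finset.Icc (-(K : ℤ)) (K : ℤ),
        qt k (p.1 + (k : ℝ) * τ * p.2)‖ ≤ 1 - 0.3353 * (f_c : ℝ) ^ 2 * Δx ^ 2 := by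
  have hfc0 : (0:ℝ) < f_c := by exact_mod_cast hfc
  set C : ℝ := 0.3353 * (f_c:ℝ)^2 with hC
  have hC0 : 0 < C := by positivity
  set m : ℤ → ℝ := fun k => min (⨅ i : Fin N, (x i - p.1 + (k : ℝ) * τ * (v i - p.2)) ^ 2)
      (0.1649 ^ 2 / (f_c : ℝ) ^ 2) with hm
  have key : ∀ k ∈ Finset.Icc (-(K:ℤ)) (K:ℤ),
      ‖qt k (p.1 + (k:ℝ)*τ*p.2)‖ ≤ 1 - C * m k := by
    intro k hk
    rw [Finset.mem_Icc] at hk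
    have hk' : |k| ≤ (K:ℤ) := abs_le.mpr hk
    set t := p.1 + (k:ℝ)*τ*p.2 with ht
    have hd : ∀ i : Fin N, t - (x i + (k:ℝ)*τ*v i) = -(x i - p.1 + (k:ℝ)*τ*(v i - p.2)) := by
      intro i; rw [ht]; ring
    obtain ⟨i₀, -, hi₀⟩ := Finset.exists_min_image Finset.univ
      (fun i => |x i - p.1 + (k:ℝ)*τ*(v i - p.2)|) ⟨⟨0, hN⟩, Finset.mem_univ _⟩
    by_cases hcase : |x i₀ - p.1 + (k:ℝ)*τ*(v i₀ - p.2)| ≤ 0.1649/(f_c:ℝ)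
    · have h1 := ha k hk' i₀ t (by rw [hd i₀, abs_neg]; exact hcase)
      have hmin : m k ≤ (x i₀ - p.1 + (k:ℝ)*τ*(v i₀ - p.2))^2 :=
        le_trans (min_le_left _ _)
          (ciInf_le (Set.Finite.bddBelow (Set.finite_range _)) i₀)
      have hsq : (t - (x i₀ + (k:ℝ)*τ*v i₀))^2 = (x i₀ - p.1 + (k:ℝ)*τ*(v i₀ - p.2))^2 := by
        rw [hd i₀]; ring
      rw [hsq] at h1
      nlinarith [hC0, hmin]
    · push_neg at hcase
      have h2 := hb k hk' t (fun i => by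
        rw [hd i, abs_neg]
        exact lt_of_lt_of_le hcase (hi₀ i (Finset.mem_univ i)))
      have hmin : m k ≤ 0.1649^2/(f_c:ℝ)^2 := min_le_right _ _
      have hfe : C * (0.1649^2/(f_c:ℝ)^2) = 0.3353 * 0.1649^2 := by
        rw [hC]; field_simp
      nlinarith [hC0, hmin]
  have hcard : (Finset.Icc (-(K:ℤ)) (K:ℤ)).card = 2*K+1 := by
    rw [Int.card_Icc]; omega
  have hsum : ‖∑ k ∈ Finset.Icc (-(K:ℤ)) (K:ℤ), qt k (p.1 + (k:ℝ)*τ*p.2)‖ ≤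
      (2*(K:ℝ)+1) - C * ∑ k ∈ Finset.Icc (-(K:ℤ)) (K:ℤ), m k := by
    refine (norm_sum_le _ _).trans ?_
    refine le_trans (Finset.sum_le_sum key) ?_
    rw [Finset.sum_sub_distrib, Finset.sum_const, hcard, ← Finset.mul_sum]
    push_cast; ring_nf; exact le_refl _
  have hscalar : (1 / (2 * (K:ℂ) + 1)) = ((1/(2*(K:ℝ)+1) : ℝ) : ℂ) := by push_cast; ring
  rw [hscalar, norm_mul, Complex.norm_real]
  have hKpos : (0:ℝ) < 2*(K:ℝ)+1 := by positivity
  rw [Real.norm_eq_abs, abs_of_pos (by positivity)]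
  have := hsum
  set S := ∑ k ∈ Finset.Icc (-(K:ℤ)) (K:ℤ), m k with hS
  have h3 : (1/(2*(K:ℝ)+1)) * ‖∑ k ∈ Finset.Icc (-(K:ℤ)) (K:ℤ), qt k (p.1 + (k:ℝ)*τ*p.2)‖
      ≤ (1/(2*(K:ℝ)+1)) * ((2*(K:ℝ)+1) - C * S) := by
    apply mul_le_mul_of_nonneg_left hsum (by positivity)
  refine h3.trans ?_
  have hinv : (1/(2*(K:ℝ)+1)) * (2*(K:ℝ)+1) = 1 := by field_simp
  have hstab' : Δx^2 ≤ (1/(2*(K:ℝ)+1)) * S := hstab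
  nlinarith [hC0, hstab', mul_le_mul_of_nonneg_left hstab' hC0.le]
end
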